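/- Soundness of DFD^τ: every formula derivable in the calculus DFD^τ is true, under the synchronized semantics, at every state of every timed dynamical dependence model (and hence also at every state of every temporal model, every linear-time model, and every linear-time model with finite past). -/

import Mathlib

/-- Terms of DFD: `x ::= v | ○x`. -/
inductive Tm (V : Type) : Type where
  | base : V → Tm V
  | next : Tm V → Tm V
deriving DecidableEq

namespace Tm

variable {V : Type}

/-- The set of terms `○X := {○x : x ∈ X}`. -/
def nextSet [DecidableEq V] (X : Finset (Tm V)) : Finset (Tm V) := X.image Tm.next

/-- The number of `○`'s in a term. -/
def depth : Tm V → ℕ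
  | .base _ => 0
  | .next x => x.depth + 1

/-- The basic variable underlying a term. -/
def baseVar : Tm V → V
  | .base v => v
  | .next x => x.baseVar

/-- The term `○ⁿ x`. -/
def iter : ℕ → Tm V → Tm V
  | 0, x => x
  | n + 1, x => .next (iter n x)

/-- The set of terms `○ⁿ X`. -/
def iterSet [DecidableEq V] : ℕ → Finset (Tm V) → Finset (Tm V)
  | 0, X => X
  | n + 1, X => nextSet (iterSet n X)

end Tm

/-- Formulas of the language `L` of DFD, for the vocabulary `(V, Pred, ar)`. -/
inductive Fm (V Pred : Type) (ar : Pred → ℕ) : Type where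
  | atom : (P : Pred) → (Fin (ar P) → Tm V) → Fm V Pred ar
  | neg : Fm V Pred ar → Fm V Pred ar
  | and : Fm V Pred ar → Fm V Pred ar → Fm V Pred ar
  | next : Fm V Pred ar → Fm V Pred ar
  | dquant : Finset (Tm V) → Fm V Pred ar → Fm V Pred ar
  | datom : Finset (Tm V) → Tm V → Fm V Pred ar

namespace Fm

variable {V Pred : Type} {ar : Pred → ℕ}

/-- Material implication, defined from `¬` and `∧`. -/
def imp (φ ψ : Fm V Pred ar) : Fm V Pred ar := .neg (.and φ (.neg ψ))

/-- Material biconditional. -/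
def iff (φ ψ : Fm V Pred ar) : Fm V Pred ar := .and (φ.imp ψ) (ψ.imp φ)

/-- The formula `○ⁿ φ`. -/
def iterNext : ℕ → Fm V Pred ar → Fm V Pred ar
  | 0, φ => φ
  | n + 1, φ => .next (iterNext n φ)

/-- Boolean evaluation of a formula under a valuation of formulas; formulas that are not
negations or conjunctions are treated as propositional atoms. -/
def boolEval (v : Fm V Pred ar → Bool) : Fm V Pred ar → Bool
  | .neg φ => !(boolEval v φ)
  | .and φ ψ => boolEval v φ && boolEval v ψ
  | φ => v φ

/-- Classical propositional tautologies. -/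
def Taut (φ : Fm V Pred ar) : Prop := ∀ v, boolEval v φ = true

/-- A fixed trivially valid formula `D_{{v₀}} v₀`, used as the empty conjunction. -/
def vtop [Inhabited V] : Fm V Pred ar := .datom {Tm.base default} (Tm.base default)

/-- Conjunction of a list of formulas. -/
def bigAnd [Inhabited V] : List (Fm V Pred ar) → Fm V Pred ar
  | [] => vtop
  | φ :: l => l.foldl Fm.and φ

/-- The formula `D_X Y`: the conjunction of `D_X y` over `y ∈ Y`. -/
noncomputable def depF [Inhabited V] (X Y : Finset (Tm V)) : Fm V Pred ar :=
  bigAnd (Y.toList.map (Fm.datom X))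

/-- Membership in the fragment `L^{≠∅}`: every index set of a dependence quantifier or
dependence atom is non-empty. -/
def neIdx : Fm V Pred ar → Prop
  | .atom _ _ => True
  | .neg φ => φ.neIdx
  | .and φ ψ => φ.neIdx ∧ ψ.neIdx
  | .next φ => φ.neIdx
  | .dquant X φ => X.Nonempty ∧ φ.neIdx
  | .datom X _ => X.Nonempty

end Fm

/-- The set `V = {v₁, …, v_N}` of all basic variables, as a set of terms. -/
def fullV (V : Type) [Fintype V] [DecidableEq V] : Finset (Tm V) :=
  (Finset.univ : Finset V).image Tm.base
/-- The frame part of a standard relational model. -/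
structure StdFrame (V : Type) where
  W : Type
  nonempty : Nonempty W
  g : W → W
  rel : V → W → W → Prop

/-- Extension of the relations `∼_v` to arbitrary terms: `s ∼_{○x} w iff g(s) ∼_x g(w)`. -/
def StdFrame.trel {V : Type} (F : StdFrame V) : Tm V → F.W → F.W → Prop
  | .base v => F.rel v
  | .next x => fun s w => F.trel x (F.g s) (F.g w)

/-- The relation `∼_X`: intersection of the `∼_x` for `x ∈ X` (`∼_∅` is universal). -/
def StdFrame.srel {V : Type} (F : StdFrame V) (X : Finset (Tm V)) (s w : F.W) : Prop :=
  ∀ x ∈ X, F.trel x s w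

/-- Standard relational models. -/
structure StdModel (V Pred : Type) (ar : Pred → ℕ) extends StdFrame V where
  equiv : ∀ v : V, Equivalence (rel v)
  gPres : ∀ s w, (∀ v : V, rel v s w) → ∀ v : V, rel v (g s) (g w)
  val : (P : Pred) → (Fin (ar P) → Tm V) → W → Prop
  valClosed : ∀ (P : Pred) (args : Fin (ar P) → Tm V) (X : Finset (Tm V)) (s w : W),
      toStdFrame.srel X s w → (∀ i, args i ∈ X) → val P args s → val P args w

variable {V Pred : Type} {ar : Pred → ℕ}

/-- Truth of a formula at a state of a standard relational model. -/
def StdModel.sat (M : StdModel V Pred ar) : Fm V Pred ar → M.W → Prop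
  | .atom P args, s => M.val P args s
  | .neg φ, s => ¬ M.sat φ s
  | .and φ ψ, s => M.sat φ s ∧ M.sat ψ s
  | .next φ, s => M.sat φ (M.g s)
  | .dquant X φ, s => ∀ t, M.toStdFrame.srel X s t → M.sat φ t
  | .datom X y, s => ∀ t, M.toStdFrame.srel X s t → M.toStdFrame.trel y s t

/-- Dynamical dependence models. -/
structure DynModel (V Pred : Type) (ar : Pred → ℕ) where
  /-- the value domain `𝔻_v` of each basic variable -/
  Dom : V → Type
  /-- the set of states -/
  S : Type
  nonempty : Nonempty S
  /-- the dynamical map -/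
  g : S → S
  /-- the dynamical variable interpreting each basic variable symbol -/
  val : (v : V) → S → Dom v
  /-- interpretation of predicates as relations on `⋃_v 𝔻_v` -/
  I : (P : Pred) → ((Fin (ar P)) → (Σ v : V, Dom v)) → Prop
  /-- states are uniquely determined by the values of all basic variables -/
  sep : ∀ s t : S, (∀ v : V, val v s = val v t) → s = t

/-- The value of a term at a state (an element of `𝔻_x = 𝔻_{baseVar x}`). -/
def DynModel.tval (M : DynModel V Pred ar) : (x : Tm V) → M.S → M.Dom x.baseVar
  | .base v, s => M.val v s
  | .next x, s => M.tval x (M.g s)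

/-- The value of a term at a state, as an element of `⋃_v 𝔻_v`. -/
def DynModel.tvalS (M : DynModel V Pred ar) (x : Tm V) (s : M.S) : Σ v : V, M.Dom v :=
  ⟨x.baseVar, M.tval x s⟩

/-- Value agreement `s =_X w`. -/
def DynModel.agree (M : DynModel V Pred ar) (X : Finset (Tm V)) (s w : M.S) : Prop :=
  ∀ x ∈ X, M.tval x s = M.tval x w

/-- Truth of a formula at a state of a dynamical dependence model. -/
def DynModel.sat (M : DynModel V Pred ar) : Fm V Pred ar → M.S → Prop
  | .atom P args, s => M.I P (fun i => M.tvalS (args i) s)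
  | .neg φ, s => ¬ M.sat φ s
  | .and φ ψ, s => M.sat φ s ∧ M.sat ψ s
  | .next φ, s => M.sat φ (M.g s)
  | .dquant X φ, s => ∀ w, M.agree X s w → M.sat φ w
  | .datom X y, s => ∀ w, M.agree X s w → M.tval y s = M.tval y w
section Tau

variable {V Pred : Type} {ar : Pred → ℕ}

/-- The substitution `φ[v₁/○v₁, …, v_N/○v_N]`, replacing every occurrence of every basic
variable by its next-step term (so every term `x` becomes `○x`). -/
def Fm.shift [DecidableEq V] : Fm V Pred ar → Fm V Pred ar
  | .atom P args => .atom P fun i => Tm.next (args i)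
  | .neg φ => (Fm.shift φ).neg
  | .and φ ψ => (Fm.shift φ).and (Fm.shift ψ)
  | .next φ => (Fm.shift φ).next
  | .dquant X φ => .dquant (Tm.nextSet X) (Fm.shift φ)
  | .datom X y => .datom (Tm.nextSet X) (Tm.next y)

/-- The translation `𝔗 : L → L₋` eliminating the formula-level next-time operator: it keeps
atoms `P(x⃗)` and `D_X y` unchanged, commutes with `¬`, `∧` and `𝖣_X`, and sets
`𝔗(○φ) := 𝔗(φ)[v₁/○v₁, …, v_N/○v_N]`. -/
def Fm.tr [DecidableEq V] : Fm V Pred ar → Fm V Pred ar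
  | .atom P args => .atom P args
  | .neg φ => (Fm.tr φ).neg
  | .and φ ψ => (Fm.tr φ).and (Fm.tr ψ)
  | .next φ => (Fm.tr φ).shift
  | .dquant X φ => .dquant X (Fm.tr φ)
  | .datom X y => .datom X y

variable [DecidableEq V] [Fintype V] [Inhabited V]

/-- The axioms of the calculus DFD^τ, apart from classical propositional tautologies: as DFD,
but without `𝖣-○` and with Next-Time₁ and Next-Time₂ strengthened to equivalences. -/
inductive DFDTAxiom : Fm V Pred ar → Prop where
  | oDist (φ ψ : Fm V Pred ar) :
      DFDTAxiom ((Fm.next (φ.imp ψ)).imp ((Fm.next φ).imp (Fm.next ψ)))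
  | funct (φ : Fm V Pred ar) :
      DFDTAxiom ((Fm.next φ.neg).iff (Fm.next φ).neg)
  | dDist (X : Finset (Tm V)) (φ ψ : Fm V Pred ar) :
      DFDTAxiom ((Fm.dquant X (φ.imp ψ)).imp ((Fm.dquant X φ).imp (Fm.dquant X ψ)))
  | dIntro1 (P : Pred) (args : Fin (ar P) → Tm V) :
      DFDTAxiom ((Fm.atom P args).imp (Fm.dquant (Finset.image args Finset.univ) (Fm.atom P args)))
  | dIntro2 (X : Finset (Tm V)) (y : Tm V) :
      DFDTAxiom ((Fm.datom X y).imp (Fm.dquant X (Fm.datom X y)))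
  | dT (X : Finset (Tm V)) (φ : Fm V Pred ar) :
      DFDTAxiom ((Fm.dquant X φ).imp φ)
  | d4 (X : Finset (Tm V)) (φ : Fm V Pred ar) :
      DFDTAxiom ((Fm.dquant X φ).imp (Fm.dquant X (Fm.dquant X φ)))
  | d5 (X : Finset (Tm V)) (φ : Fm V Pred ar) :
      DFDTAxiom ((Fm.dquant X φ).neg.imp (Fm.dquant X (Fm.dquant X φ).neg))
  | depRef (X : Finset (Tm V)) (x : Tm V) (h : x ∈ X) :
      DFDTAxiom (Fm.datom X x)
  | depTrans (X Y Z : Finset (Tm V)) :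
      DFDTAxiom (((Fm.depF X Y).and (Fm.depF Y Z)).imp (Fm.depF X Z))
  | determinism (v : V) :
      DFDTAxiom (Fm.datom (fullV V) (Tm.next (Tm.base v)))
  | transfer (X Y : Finset (Tm V)) (φ : Fm V Pred ar) :
      DFDTAxiom (((Fm.depF X Y).and (Fm.dquant Y φ)).imp (Fm.dquant X φ))
  | atomicRed (P : Pred) (args : Fin (ar P) → Tm V) :
      DFDTAxiom ((Fm.next (Fm.atom P args)).iff (Fm.atom P fun i => Tm.next (args i)))
  | tNextTime1 (X : Finset (Tm V)) (φ : Fm V Pred ar) :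
      DFDTAxiom ((Fm.next (Fm.dquant X φ)).iff (Fm.dquant (Tm.nextSet X) (Fm.next φ)))
  | tNextTime2 (X : Finset (Tm V)) (y : Tm V) :
      DFDTAxiom ((Fm.next (Fm.datom X y)).iff (Fm.datom (Tm.nextSet X) (Tm.next y)))

/-- Derivability in the calculus DFD^τ. -/
inductive DFDTDeriv : Fm V Pred ar → Prop where
  | ax {φ : Fm V Pred ar} : DFDTAxiom φ → DFDTDeriv φ
  | taut {φ : Fm V Pred ar} : Fm.Taut φ → DFDTDeriv φ
  | mp {φ ψ : Fm V Pred ar} : DFDTDeriv (φ.imp ψ) → DFDTDeriv φ → DFDTDeriv ψ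
  | dNec (X : Finset (Tm V)) {φ : Fm V Pred ar} : DFDTDeriv φ → DFDTDeriv (Fm.dquant X φ)
  | oNec {φ : Fm V Pred ar} : DFDTDeriv φ → DFDTDeriv (Fm.next φ)

end Tau

/-- A timing map on a dynamical system `(S, g)`: `τ(s) = 0` on initial states (states not in
the range of `g`) and `τ(g(s)) = τ(s) + 1` (with `∞ + 1 = ∞`). -/
def IsTimingMap {S : Type} (g : S → S) (τ : S → ℕ∞) : Prop :=
  (∀ s, (∀ w, g w ≠ s) → τ s = 0) ∧ ∀ s, τ (g s) = τ s + 1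

section Sync

variable {V Pred : Type} {ar : Pred → ℕ}

/-- Truth of a formula at a state of a timed dynamical dependence model under the
**synchronized semantics**: the dependence quantifier and dependence atoms are evaluated
using synchronized value agreement `s =^τ_X w` (value agreement plus equal time). -/
def DynModel.satSync (M : DynModel V Pred ar) (τ : M.S → ℕ∞) :
    Fm V Pred ar → M.S → Prop
  | .atom P args, s => M.I P (fun i => M.tvalS (args i) s)
  | .neg φ, s => ¬ M.satSync τ φ s
  | .and φ ψ, s => M.satSync τ φ s ∧ M.satSync τ ψ s
  | .next φ, s => M.satSync τ φ (M.g s)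
  | .dquant X φ, s => ∀ w, (M.agree X s w ∧ τ s = τ w) → M.satSync τ φ w
  | .datom X y, s => ∀ w, (M.agree X s w ∧ τ s = τ w) →
      (M.tval y s = M.tval y w ∧ τ s = τ w)

end Sync

/-- A dynamical map is temporal iff it is injective. -/
def IsTemporal {S : Type} (g : S → S) : Prop := Function.Injective g

/-- Linear-time systems: temporal and acyclic. -/
def IsLinearTime {S : Type} (g : S → S) : Prop :=
  Function.Injective g ∧ ∀ (s : S) (n : ℕ), 1 ≤ n → g^[n] s ≠ s

/-- Linear-time systems with finite past: every state arises from an initial state in finitely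
many steps. -/
def IsLinearTimeFinitePast {S : Type} (g : S → S) : Prop :=
  IsLinearTime g ∧ ∀ s : S, ∃ (n : ℕ) (s₀ : S), (∀ w, g w ≠ s₀) ∧ g^[n] s₀ = s

/-! A timing map makes `τ` and `g` interlock: `τ (g s) = τ (g w)` forces `τ s = τ w`, and a state
whose time equals that of some `g s` has non-zero time, so it is itself of the form `g w'`.
Hence synchronized agreement on `○X` at `s, w` is synchronized agreement on `X` at `g s, g w`, and
every state synchronized with `g s` is a successor. This is exactly what the two Next-Time
equivalences need; all other axioms only use that `=^τ_X` is an equivalence relation refining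
`=_X`, together with the separation property of dynamical dependence models for Determinism. -/

namespace IsTimingMap

variable {S : Type} {g : S → S} {τ : S → ℕ∞}

theorem map_ne_zero (hτ : IsTimingMap g τ) (s : S) : τ (g s) ≠ 0 := by
  simp [hτ.2 s]

theorem map_eq_map_iff (hτ : IsTimingMap g τ) {s w : S} : τ (g s) = τ (g w) ↔ τ s = τ w := by
  rw [hτ.2, hτ.2]
  exact WithTop.add_right_inj ENat.one_ne_top

theorem exists_map_eq_of_eq_map (hτ : IsTimingMap g τ) {s w : S} (h : τ (g s) = τ w) :
    ∃ w', g w' = w := by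
  by_contra! hw
  exact hτ.map_ne_zero s (h.trans (hτ.1 w hw))

end IsTimingMap

namespace DynModel

variable {V Pred : Type} {ar : Pred → ℕ} {M : DynModel V Pred ar} {τ : M.S → ℕ∞}

variable (M τ) in
def syncAgree (X : Finset (Tm V)) (s w : M.S) : Prop := M.agree X s w ∧ τ s = τ w

theorem syncAgree_equivalence (X : Finset (Tm V)) : Equivalence (M.syncAgree τ X) where
  refl _ := ⟨fun _ _ => rfl, rfl⟩
  symm h := ⟨fun x hx => (h.1 x hx).symm, h.2.symm⟩
  trans h h' := ⟨fun x hx => (h.1 x hx).trans (h'.1 x hx), h.2.trans h'.2⟩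

theorem agree_nextSet [DecidableEq V] {X : Finset (Tm V)} {s w : M.S} :
    M.agree (Tm.nextSet X) s w ↔ M.agree X (M.g s) (M.g w) := by
  simp only [agree, Tm.nextSet, Finset.forall_mem_image, tval]
  rfl

theorem syncAgree_nextSet [DecidableEq V] (hτ : IsTimingMap M.g τ) {X : Finset (Tm V)}
    {s w : M.S} : M.syncAgree τ (Tm.nextSet X) s w ↔ M.syncAgree τ X (M.g s) (M.g w) := by
  rw [syncAgree, syncAgree, agree_nextSet, hτ.map_eq_map_iff]

theorem forall_syncAgree_map_iff [DecidableEq V] (hτ : IsTimingMap M.g τ)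
    {X : Finset (Tm V)} {s : M.S} {P : M.S → Prop} :
    (∀ w, M.syncAgree τ X (M.g s) w → P w) ↔
      ∀ w, M.syncAgree τ (Tm.nextSet X) s w → P (M.g w) := by
  simp only [syncAgree_nextSet hτ]
  refine ⟨fun h w hw => h _ hw, fun h w hw => ?_⟩
  obtain ⟨w, rfl⟩ := hτ.exists_map_eq_of_eq_map hw.2
  exact h w hw

@[simp]
theorem satSync_imp {φ ψ : Fm V Pred ar} {s : M.S} :
    M.satSync τ (φ.imp ψ) s ↔ (M.satSync τ φ s → M.satSync τ ψ s) := by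
  simp only [Fm.imp, satSync]
  tauto

@[simp]
theorem satSync_iff {φ ψ : Fm V Pred ar} {s : M.S} :
    M.satSync τ (φ.iff ψ) s ↔ (M.satSync τ φ s ↔ M.satSync τ ψ s) := by
  simp only [Fm.iff, satSync, satSync_imp]
  tauto

theorem satSync_next {φ : Fm V Pred ar} {s : M.S} :
    M.satSync τ (.next φ) s ↔ M.satSync τ φ (M.g s) :=
  Iff.rfl

theorem satSync_dquant {X : Finset (Tm V)} {φ : Fm V Pred ar} {s : M.S} :
    M.satSync τ (.dquant X φ) s ↔ ∀ w, M.syncAgree τ X s w → M.satSync τ φ w :=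
  Iff.rfl

theorem satSync_datom {X : Finset (Tm V)} {y : Tm V} {s : M.S} :
    M.satSync τ (.datom X y) s ↔ ∀ w, M.syncAgree τ X s w → M.tval y s = M.tval y w :=
  forall₂_congr fun _ hw => and_iff_left hw.2

theorem satSync_foldl_and (l : List (Fm V Pred ar)) (φ : Fm V Pred ar) (s : M.S) :
    M.satSync τ (l.foldl Fm.and φ) s ↔ M.satSync τ φ s ∧ ∀ ψ ∈ l, M.satSync τ ψ s := by
  induction l generalizing φ with
  | nil => simp
  | cons ψ l ih => simp only [List.foldl_cons, ih, satSync, List.forall_mem_cons, and_assoc]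

theorem satSync_bigAnd [Inhabited V] (l : List (Fm V Pred ar)) (s : M.S) :
    M.satSync τ (Fm.bigAnd l) s ↔ ∀ φ ∈ l, M.satSync τ φ s := by
  cases l with
  | nil =>
    simpa [Fm.bigAnd, Fm.vtop, satSync_datom] using fun w hw => hw.1 _ (Finset.mem_singleton_self _)
  | cons φ l => rw [Fm.bigAnd, satSync_foldl_and, List.forall_mem_cons]

theorem satSync_depF [Inhabited V] {X Y : Finset (Tm V)} {s : M.S} :
    M.satSync τ (Fm.depF X Y : Fm V Pred ar) s ↔
      ∀ w, M.syncAgree τ X s w → M.syncAgree τ Y s w := by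
  simp only [Fm.depF, satSync_bigAnd, List.forall_mem_map, Finset.mem_toList, satSync_datom]
  exact ⟨fun h w hw => ⟨fun y hy => h y hy w hw, hw.2⟩, fun h y hy w hw => (h w hw).1 y hy⟩

open Classical in
theorem boolEval_decide_satSync (s : M.S) (φ : Fm V Pred ar) :
    Fm.boolEval (fun ψ => decide (M.satSync τ ψ s)) φ = true ↔ M.satSync τ φ s := by
  induction φ with
  | neg φ ih => simp [Fm.boolEval, ← ih, satSync]
  | and φ ψ ihφ ihψ => simp [Fm.boolEval, ← ihφ, ← ihψ, satSync]
  | _ => simp [Fm.boolEval]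

theorem satSync_of_taut {φ : Fm V Pred ar} (h : Fm.Taut φ) (s : M.S) : M.satSync τ φ s := by
  classical
  exact (boolEval_decide_satSync s φ).1 (h _)

theorem satSync_of_axiom [DecidableEq V] [Fintype V] [Inhabited V] (hτ : IsTimingMap M.g τ)
    {φ : Fm V Pred ar} (h : DFDTAxiom φ) (s : M.S) : M.satSync τ φ s := by
  have hsync (X : Finset (Tm V)) := syncAgree_equivalence (M := M) (τ := τ) X
  induction h with
  | oDist φ ψ =>
    simp only [satSync_imp, satSync_next]
    exact id
  | funct φ | atomicRed P args => exact satSync_iff.2 Iff.rfl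
  | dDist X φ ψ =>
    simp only [satSync_imp, satSync_dquant]
    exact fun h₁ h₂ w hw => h₁ w hw (h₂ w hw)
  | dIntro1 P args =>
    refine satSync_imp.2 fun h w hw => (congrArg (M.I P) (funext fun i => ?_)).mp h
    exact Sigma.ext rfl (heq_of_eq (hw.1 _ (Finset.mem_image_of_mem _ (Finset.mem_univ i))))
  | dIntro2 X y =>
    simp only [satSync_imp, satSync_dquant, satSync_datom]
    exact fun h w hw t ht => (h w hw).symm.trans (h t ((hsync X).trans hw ht))
  | dT X φ => exact satSync_imp.2 fun h => h s ((hsync X).refl s)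
  | d4 X φ => exact satSync_imp.2 fun h w hw t ht => h t ((hsync X).trans hw ht)
  | d5 X φ =>
    exact satSync_imp.2 fun h w hw h' =>
      h fun t ht => h' t ((hsync X).trans ((hsync X).symm hw) ht)
  | depRef X x hx => exact satSync_datom.2 fun w hw => hw.1 x hx
  | depTrans X Y Z =>
    simp only [satSync_imp, satSync, satSync_depF]
    exact fun h w hw => h.2 w (h.1 w hw)
  | determinism v =>
    refine satSync_datom.2 fun w hw => ?_
    obtain rfl := M.sep s w fun u => hw.1 _ (Finset.mem_image_of_mem _ (Finset.mem_univ u))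
    rfl
  | transfer X Y φ =>
    simp only [satSync_imp, satSync, satSync_depF]
    exact fun h w hw => h.2 w (h.1 w hw)
  | tNextTime1 X φ => exact satSync_iff.2 (forall_syncAgree_map_iff (P := M.satSync τ φ) hτ)
  | tNextTime2 X y =>
    simp only [satSync_iff, satSync_next, satSync_datom]
    exact forall_syncAgree_map_iff (P := fun w => M.tval y (M.g s) = M.tval y w) hτ

end DynModel

/-- **Soundness of DFD^τ**: every formula derivable in the calculus DFD^τ is true, under the
synchronized semantics, at every state of every timed dynamical dependence model (and hence
also at every state of every temporal, linear-time, or finite-past linear-time model). -/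
theorem DFDT_soundness {V Pred : Type} [DecidableEq V] [Fintype V] [Inhabited V]
    {ar : Pred → ℕ} :
    ∀ φ : Fm V Pred ar, DFDTDeriv φ →
      ∀ (M : DynModel V Pred ar) (τ : M.S → ℕ∞),
        IsTimingMap M.g τ → ∀ s : M.S, M.satSync τ φ s := by
  intro φ hφ M τ hτ
  induction hφ with
  | ax h => exact DynModel.satSync_of_axiom hτ h
  | taut h => exact DynModel.satSync_of_taut h
  | mp _ _ ihImp ih => exact fun s => DynModel.satSync_imp.1 (ihImp s) (ih s)
  | dNec X _ ih => exact fun _ w _ => ih w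
  | oNec _ ih => exact fun s => ih (M.g s)
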